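/- arXiv:0905.1090 — 2 statements merged into one kernel-verified Lean document; each statement's English description precedes it below -/
import Mathlib

section
/- Let O_F be an F-order ideal with each O_i nonempty. Then the set of all F-terms T^n·f_1 ∪ ⋯ ∪ T^n·f_m equals the union ⋃_{j=0}^∞ ∂^j O_F of all higher borders of O_F, and this union is disjoint, i.e., ∂^i O_F ∩ ∂^j O_F = ∅ for i ≠ j. -/
open MvPolynomial

/-- An order ideal: a finite set of terms (exponent vectors), closed under divisors. -/
def IsOrderIdeal {n : ℕ} (O : Finset (Fin n →₀ ℕ)) : Prop :=
  ∀ t ∈ O, ∀ s : Fin n →₀ ℕ, s ≤ t → s ∈ O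

/-- The `F`-order ideal `O_F = O_1·f_1 ∪ ⋯ ∪ O_m·f_m`, i.e. the set of products `t·f_i`
with `t ∈ O_i`. -/
def fTermSet {K : Type*} [Field K] {n m : ℕ} (O : Fin m → Finset (Fin n →₀ ℕ))
    (f : Fin m → MvPolynomial (Fin n) K) : Set (MvPolynomial (Fin n) K) :=
  ⋃ i, (fun t => (monomial t (1 : K)) * f i) '' (O i : Set (Fin n →₀ ℕ))

/-- The border `∂S = (x_1·S ∪ ⋯ ∪ x_n·S) \ S`. -/
def borderS {K : Type*} [Field K] {n : ℕ} (S : Set (MvPolynomial (Fin n) K)) :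
    Set (MvPolynomial (Fin n) K) :=
  (⋃ j : Fin n, (fun g => X j * g) '' S) \ S

/-- The `k`-th border closure: `∂̄⁰S = S` and `∂̄^{k+1}S = ∂̄^k S ∪ ∂(∂̄^k S)`. -/
def borderClosureS {K : Type*} [Field K] {n : ℕ} (S : Set (MvPolynomial (Fin n) K)) :
    ℕ → Set (MvPolynomial (Fin n) K)
  | 0 => S
  | k + 1 => borderClosureS S k ∪ borderS (borderClosureS S k)

/-- The `k`-th border: `∂⁰S = S` and `∂^{k+1}S = ∂(∂̄^k S)`. -/
def higherBorderS {K : Type*} [Field K] {n : ℕ} (S : Set (MvPolynomial (Fin n) K)) :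
    ℕ → Set (MvPolynomial (Fin n) K)
  | 0 => S
  | k + 1 => borderS (borderClosureS S k)

/-!
The border closures `∂̄^k S` increase with `k`, and `∂^{k+1} S = ∂̄^{k+1} S \ ∂̄^k S`, so the higher
borders are exactly the disjointed pieces of that increasing sequence; hence they are pairwise
disjoint and their union is `⋃ₖ ∂̄^k S`. This union is the smallest set containing `S` that is
closed under multiplication by the variables, i.e. `{t·g | g ∈ S}`. For `S = O_F` with every `O_i`
containing `1`, that is the set of all `F`-terms.
-/

section MonomialMul

variable {σ R : Type*} [CommSemiring R] {U : Set (MvPolynomial σ R)}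

theorem monomial_one_mul_mem_of_X_mul_mem (hU : ∀ j, ∀ g ∈ U, X j * g ∈ U)
    (t : σ →₀ ℕ) {g : MvPolynomial σ R} (hg : g ∈ U) : monomial t (1 : R) * g ∈ U := by
  have X_pow_mul_mem : ∀ j (e : ℕ) {g}, g ∈ U → X j ^ e * g ∈ U := by
    intro j e g hg
    induction e with
    | zero => simpa using hg
    | succ e ih => simpa only [pow_succ', mul_assoc] using hU j _ ih
  induction t using Finsupp.induction with
  | zero => simpa using hg
  | single_add j e t _ _ ih =>
    rw [monomial_single_add, mul_assoc]
    exact X_pow_mul_mem j e ih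

end MonomialMul

section Border

open Function

variable {K : Type*} [Field K] {n : ℕ} (S : Set (MvPolynomial (Fin n) K))

theorem borderClosureS_monotone : Monotone (borderClosureS S) :=
  monotone_nat_of_le_succ fun _ => Set.subset_union_left

theorem higherBorderS_eq_disjointed : higherBorderS S = disjointed (borderClosureS S) := by
  funext k
  cases k with
  | zero => rw [disjointed_zero]; rfl
  | succ k =>
    have h := (borderClosureS_monotone S).disjointed_succ (not_isMax k)
    rw [Order.succ_eq_add_one] at h
    rw [h]
    simp only [higherBorderS, borderClosureS, Set.union_sdiff_left, borderS, Set.sdiff_sdiff,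
      Set.union_self]

theorem pairwise_disjoint_higherBorderS : Pairwise (Disjoint on higherBorderS S) := by
  rw [higherBorderS_eq_disjointed]
  exact disjoint_disjointed _

theorem iUnion_higherBorderS : ⋃ k, higherBorderS S k = ⋃ k, borderClosureS S k := by
  rw [higherBorderS_eq_disjointed, iUnion_disjointed]

variable {S}

theorem X_mul_mem_borderClosureS_succ {k : ℕ} {g : MvPolynomial (Fin n) K}
    (hg : g ∈ borderClosureS S k) (j : Fin n) : X j * g ∈ borderClosureS S (k + 1) := by
  by_cases h : X j * g ∈ borderClosureS S k
  · exact Or.inl h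
  · exact Or.inr ⟨Set.mem_iUnion.mpr ⟨j, g, hg, rfl⟩, h⟩

theorem borderClosureS_subset {U : Set (MvPolynomial (Fin n) K)} (hSU : S ⊆ U)
    (hU : ∀ j, ∀ g ∈ U, X j * g ∈ U) (k : ℕ) : borderClosureS S k ⊆ U := by
  induction k with
  | zero => exact hSU
  | succ k ih =>
    rintro g (hg | ⟨hg, -⟩)
    · exact ih hg
    · obtain ⟨j, g', hg', rfl⟩ := Set.mem_iUnion.mp hg
      exact hU j g' (ih hg')

variable (S)

theorem iUnion_borderClosureS :
    ⋃ k, borderClosureS S k = ⋃ t, (fun g => monomial t (1 : K) * g) '' S := by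
  apply subset_antisymm
  · refine Set.iUnion_subset (borderClosureS_subset (fun g hg => ?_) ?_)
    · exact Set.mem_iUnion.mpr ⟨0, g, hg, by simp⟩
    · intro j g hg
      obtain ⟨t, g', hg', rfl⟩ := Set.mem_iUnion.mp hg
      refine Set.mem_iUnion.mpr ⟨Finsupp.single j 1 + t, g', hg', ?_⟩
      simp only [monomial_single_add, pow_one, mul_assoc]
  · refine Set.iUnion_subset fun t => Set.image_subset_iff.mpr fun g hg => ?_
    refine monomial_one_mul_mem_of_X_mul_mem (fun j g hg => ?_) t
      (Set.mem_iUnion.mpr ⟨0, hg⟩)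
    obtain ⟨k, hk⟩ := Set.mem_iUnion.mp hg
    exact Set.mem_iUnion.mpr ⟨k + 1, X_mul_mem_borderClosureS_succ hk j⟩

end Border

theorem IsOrderIdeal.zero_mem {n : ℕ} {O : Finset (Fin n →₀ ℕ)} (hO : IsOrderIdeal O)
    (hne : O.Nonempty) : 0 ∈ O :=
  hO _ hne.choose_spec 0 bot_le

theorem iUnion_monomial_mul_fTermSet {K : Type*} [Field K] {n m : ℕ}
    (f : Fin m → MvPolynomial (Fin n) K) (O : Fin m → Finset (Fin n →₀ ℕ))
    (hO : ∀ i, 0 ∈ O i) :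
    ⋃ t, (fun g => monomial t (1 : K) * g) '' fTermSet O f =
      ⋃ i, Set.range fun t : Fin n →₀ ℕ => monomial t (1 : K) * f i := by
  ext g
  simp only [fTermSet, Set.image_iUnion, Set.mem_iUnion, Set.mem_image, Set.mem_range,
    Finset.mem_coe]
  constructor
  · rintro ⟨t, i, _, ⟨s, -, rfl⟩, rfl⟩
    exact ⟨i, t + s, by rw [← mul_assoc, monomial_mul, one_mul]⟩
  · rintro ⟨i, t, rfl⟩
    exact ⟨t, i, f i, ⟨0, hO i, by simp⟩, rfl⟩

theorem stmt_7_general {K : Type*} [Field K] {n m : ℕ}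
    (f : Fin m → MvPolynomial (Fin n) K)
    (O : Fin m → Finset (Fin n →₀ ℕ)) (hO : ∀ i, IsOrderIdeal (O i))
    (hne : ∀ i, (O i).Nonempty) :
    (⋃ i, Set.range fun t : Fin n →₀ ℕ => monomial t (1 : K) * f i) =
      (⋃ j : ℕ, higherBorderS (fTermSet O f) j) ∧
    ∀ i j : ℕ, i ≠ j →
      higherBorderS (fTermSet O f) i ∩ higherBorderS (fTermSet O f) j = ∅ := by
  refine ⟨?_, fun i j hij => ?_⟩
  · rw [iUnion_higherBorderS, iUnion_borderClosureS,
      iUnion_monomial_mul_fTermSet f O fun i => (hO i).zero_mem (hne i)]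
  · exact Set.disjoint_iff_inter_eq_empty.mp (pairwise_disjoint_higherBorderS _ hij)

/-- If all `O_i` are nonempty, the set of all `F`-terms `T^n·f_1 ∪ ⋯ ∪ T^n·f_m` is the
disjoint union `⋃_{j≥0} ∂^j O_F` of all higher borders of `O_F`. -/
theorem stmt_7 {K : Type*} [Field K] {n m : ℕ}
    (f : Fin m → MvPolynomial (Fin n) K) (hf : ∀ i, f i ≠ 0)
    (O : Fin m → Finset (Fin n →₀ ℕ)) (hO : ∀ i, IsOrderIdeal (O i))
    (hne : ∀ i, (O i).Nonempty) :
    (⋃ i, Set.range fun t : Fin n →₀ ℕ => monomial t (1 : K) * f i) =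
      (⋃ j : ℕ, higherBorderS (fTermSet O f) j) ∧
    ∀ i j : ℕ, i ≠ j →
      higherBorderS (fTermSet O f) i ∩ higherBorderS (fTermSet O f) j = ∅ :=
  stmt_7_general f O hO hne
end

section
/- Let O_F = {t_1 f_{α_1},…,t_μ f_{α_μ}} be an F-order ideal with each O_i nonempty, and let G = {g_1,…,g_ν} be an O_F-subideal border prebasis. Then the residue classes in P/⟨G⟩ of the elements of O_F generate the image of the ideal J in P/⟨G⟩ as a K-vector space; that is, every f ∈ J is congruent modulo ⟨g_1,…,g_ν⟩ to a K-linear combination c_1 t_1 f_{α_1} + ⋯ + c_μ t_μ f_{α_μ} with c_i ∈ K. -/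
open MvPolynomial

/-- The degree of a term (exponent vector). -/
def termDeg {n : ℕ} (t : Fin n →₀ ℕ) : ℕ := t.sum fun _ e => e

/-- The `F`-order ideal `O_F = O_1·f_1 ∪ ⋯ ∪ O_m·f_m`, encoded as the set of pairs
`(t, i)` with `t ∈ O_i`; a pair `(t, i)` represents the `F`-term `t·f_i`. -/
def fPairs {n m : ℕ} (O : Fin m → Finset (Fin n →₀ ℕ)) : Set ((Fin n →₀ ℕ) × Fin m) :=
  {p | p.1 ∈ O p.2}

/-- The border `∂S = (x_1·S ∪ ⋯ ∪ x_n·S) \ S` of a set `S` of `F`-terms. -/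
def borderP {n m : ℕ} (S : Set ((Fin n →₀ ℕ) × Fin m)) : Set ((Fin n →₀ ℕ) × Fin m) :=
  (⋃ j : Fin n, (fun p => (p.1 + Finsupp.single j 1, p.2)) '' S) \ S

/-- The `k`-th border closure: `∂̄⁰S = S` and `∂̄^{k+1}S = ∂̄^k S ∪ ∂(∂̄^k S)`. -/
def borderClosureP {n m : ℕ} (S : Set ((Fin n →₀ ℕ) × Fin m)) :
    ℕ → Set ((Fin n →₀ ℕ) × Fin m)
  | 0 => S
  | k + 1 => borderClosureP S k ∪ borderP (borderClosureP S k)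

/-- The `O_F`-index of an `F`-term: `ind_{O_F}(t·f_i) = min {k | t·f_i ∈ ∂̄^k O_F}`. -/
noncomputable def indOF {n m : ℕ} (S : Set ((Fin n →₀ ℕ) × Fin m)) (p : (Fin n →₀ ℕ) × Fin m) : ℕ :=
  sInf {k | p ∈ borderClosureP S k}

/-- The `O_F`-index of a representation `(p_1·f_1, …, p_m·f_m)` of a polynomial of `J`:
the maximum of `ind_{O_F}(t·f_i)` over `i` and `t ∈ Supp(p_i)`. -/
noncomputable def indRep {K : Type*} [Field K] {n m : ℕ}
    (O : Fin m → Finset (Fin n →₀ ℕ)) (p : Fin m → MvPolynomial (Fin n) K) : ℕ :=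
  Finset.univ.sup fun i => (p i).support.sup fun u => indOF (fPairs O) (u, i)


/-! The claim is `J ⊆ W` for the `K`-subspace `W = ⟨O_F⟩_K + ⟨G⟩` of `P`. Multiplying an
`F`-term by a variable gives an `F`-term or a border term, and a border term `b_j f_{β_j}` lies in
`W` because it differs from `g_j` by a combination of `F`-terms. Hence `W` is stable under each
`x_j`, so it is an ideal; it contains every `f_i = 1 · f_i` since the order ideals are nonempty,
hence it contains `J`. -/

theorem Submodule.mul_mem_span_sup_restrictScalars {R A : Type*} [CommSemiring R] [CommSemiring A]
    [Algebra R A] (S : Set A) (I : Ideal A) (a : A)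
    (ha : ∀ s ∈ S, a * s ∈ Submodule.span R S ⊔ I.restrictScalars R) {x : A}
    (hx : x ∈ Submodule.span R S ⊔ I.restrictScalars R) :
    a * x ∈ Submodule.span R S ⊔ I.restrictScalars R := by
  obtain ⟨y, hy, z, hz, rfl⟩ := Submodule.mem_sup.1 hx
  rw [mul_add]
  refine add_mem ?_ (Submodule.mem_sup_right (I.mul_mem_left a hz))
  clear hx
  induction hy using Submodule.span_induction with
  | mem s hs => exact ha s hs
  | zero => simp
  | add u v _ _ hu hv => rw [mul_add]; exact add_mem hu hv
  | smul r u _ hu => rw [mul_smul_comm]; exact Submodule.smul_mem _ r hu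

theorem MvPolynomial.mem_of_mem_ideal_span_of_X_mul_mem {σ R : Type*} [CommSemiring R]
    (W : Submodule R (MvPolynomial σ R)) (hX : ∀ j, ∀ x ∈ W, X j * x ∈ W)
    {S : Set (MvPolynomial σ R)} (hS : S ⊆ W) {x : MvPolynomial σ R}
    (hx : x ∈ Ideal.span S) : x ∈ W := by
  have mul_mem : ∀ p : MvPolynomial σ R, ∀ y ∈ W, p * y ∈ W := by
    intro p
    induction p using MvPolynomial.induction_on with
    | C a => intro y hy; rw [← smul_eq_C_mul]; exact W.smul_mem a hy
    | add p q hp hq => intro y hy; rw [add_mul]; exact add_mem (hp y hy) (hq y hy)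
    | mul_X p j hp => intro y hy; rw [mul_assoc]; exact hp _ (hX j y hy)
  induction hx using Submodule.span_induction with
  | mem s hs => exact hS hs
  | zero => exact W.zero_mem
  | add u v _ _ hu hv => exact add_mem hu hv
  | smul p u _ hu => exact mul_mem p u hu

theorem add_single_mem_union_borderP {n m : ℕ} {S : Set ((Fin n →₀ ℕ) × Fin m)}
    {p : (Fin n →₀ ℕ) × Fin m} (hp : p ∈ S) (j : Fin n) :
    (p.1 + Finsupp.single j 1, p.2) ∈ S ∪ borderP S := by
  by_cases h : (p.1 + Finsupp.single j 1, p.2) ∈ S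
  · exact Or.inl h
  · exact Or.inr ⟨Set.mem_iUnion.2 ⟨j, p, hp, rfl⟩, h⟩

theorem monomial_mul_mem_span_sup_of_mem_union_borderP {K : Type*} [Field K] {n m μ ν : ℕ}
    {S : Set ((Fin n →₀ ℕ) × Fin m)} (f : Fin m → MvPolynomial (Fin n) K)
    (t : Fin μ → (Fin n →₀ ℕ)) (α : Fin μ → Fin m) (hS : (Set.range fun i => (t i, α i)) = S)
    (b : Fin ν → (Fin n →₀ ℕ)) (β : Fin ν → Fin m)
    (hB : (Set.range fun j => (b j, β j)) = borderP S)
    (g : Fin ν → MvPolynomial (Fin n) K) (c : Fin μ → Fin ν → K)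
    (hg : ∀ j, g j = monomial (b j) (1 : K) * f (β j) -
      ∑ i, c i j • (monomial (t i) (1 : K) * f (α i))) :
    ∀ p ∈ S ∪ borderP S, monomial p.1 (1 : K) * f p.2 ∈
      Submodule.span K (Set.range fun i => monomial (t i) (1 : K) * f (α i)) ⊔
        (Ideal.span (Set.range g)).restrictScalars K := by
  rintro p (hp | hp)
  · rw [← hS] at hp
    obtain ⟨i, rfl⟩ := hp
    exact Submodule.mem_sup_left (Submodule.subset_span ⟨i, rfl⟩)
  · rw [← hB] at hp
    obtain ⟨j, rfl⟩ := hp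
    have border_eq : monomial (b j) (1 : K) * f (β j) =
        ∑ i, c i j • (monomial (t i) (1 : K) * f (α i)) + g j := by
      rw [hg j]; abel
    rw [border_eq]
    exact add_mem
      (Submodule.mem_sup_left (Submodule.sum_mem _ fun i _ =>
        Submodule.smul_mem _ _ (Submodule.subset_span ⟨i, rfl⟩)))
      (Submodule.mem_sup_right (Ideal.subset_span ⟨j, rfl⟩))

theorem stmt_15_general {K : Type*} [Field K] {n m μ ν : ℕ}
    (f : Fin m → MvPolynomial (Fin n) K)
    (O : Fin m → Finset (Fin n →₀ ℕ)) (hO : ∀ i, IsOrderIdeal (O i))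
    (hne : ∀ i, (O i).Nonempty)
    (t : Fin μ → (Fin n →₀ ℕ)) (α : Fin μ → Fin m)
    (hOF : (Set.range fun i => (t i, α i)) = fPairs O)
    (b : Fin ν → (Fin n →₀ ℕ)) (β : Fin ν → Fin m)
    (hB : (Set.range fun j => (b j, β j)) = borderP (fPairs O))
    (g : Fin ν → MvPolynomial (Fin n) K) (c : Fin μ → Fin ν → K)
    (hg : ∀ j, g j = monomial (b j) (1 : K) * f (β j) -
      ∑ i, c i j • (monomial (t i) (1 : K) * f (α i))) :
    ∀ q ∈ Ideal.span (Set.range f),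
      ∃ d : Fin μ → K,
        q - ∑ i, d i • (monomial (t i) (1 : K) * f (α i)) ∈
          Ideal.span (Set.range g) := by
  intro q hq
  set W : Submodule K (MvPolynomial (Fin n) K) :=
    Submodule.span K (Set.range fun i => monomial (t i) (1 : K) * f (α i)) ⊔
      (Ideal.span (Set.range g)).restrictScalars K
  have term_mem := monomial_mul_mem_span_sup_of_mem_union_borderP f t α hOF b β hB g c hg
  have X_mul_mem : ∀ j, ∀ x ∈ W, X j * x ∈ W := by
    intro j x hx
    refine Submodule.mul_mem_span_sup_restrictScalars _ _ _ ?_ hx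
    rintro _ ⟨i, rfl⟩
    have hp : (t i, α i) ∈ fPairs O := hOF ▸ ⟨i, rfl⟩
    simpa only [← mul_assoc, X, monomial_mul, one_mul, add_comm]
      using term_mem _ (add_single_mem_union_borderP hp j)
  have f_mem : Set.range f ⊆ W := by
    rintro _ ⟨i, rfl⟩
    obtain ⟨u, hu⟩ := hne i
    simpa using term_mem (0, i) (Or.inl (hO i u hu 0 zero_le))
  obtain ⟨y, hy, z, hz, rfl⟩ :=
    Submodule.mem_sup.1 (mem_of_mem_ideal_span_of_X_mul_mem W X_mul_mem f_mem hq)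
  obtain ⟨d, rfl⟩ := (Submodule.mem_span_range_iff_exists_fun K).1 hy
  exact ⟨d, by simpa using hz⟩

/-- If `G = {g_1,…,g_ν}` is an `O_F`-subideal border prebasis, then the residue classes of
the elements of `O_F` generate the image of `J` in `P ⧸ ⟨G⟩` as a `K`-vector space: every
`f ∈ J` is congruent modulo `⟨g_1,…,g_ν⟩` to a `K`-linear combination
`c_1 t_1 f_{α_1} + ⋯ + c_μ t_μ f_{α_μ}`. -/
theorem stmt_15 {K : Type*} [Field K] {n m μ ν : ℕ}
    (f : Fin m → MvPolynomial (Fin n) K) (hf : ∀ i, f i ≠ 0)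
    (O : Fin m → Finset (Fin n →₀ ℕ)) (hO : ∀ i, IsOrderIdeal (O i))
    (hne : ∀ i, (O i).Nonempty)
    (t : Fin μ → (Fin n →₀ ℕ)) (α : Fin μ → Fin m)
    (hOF : (Set.range fun i => (t i, α i)) = fPairs O)
    (b : Fin ν → (Fin n →₀ ℕ)) (β : Fin ν → Fin m)
    (hB : (Set.range fun j => (b j, β j)) = borderP (fPairs O))
    (g : Fin ν → MvPolynomial (Fin n) K) (c : Fin μ → Fin ν → K)
    (hg : ∀ j, g j = monomial (b j) (1 : K) * f (β j) -
      ∑ i, c i j • (monomial (t i) (1 : K) * f (α i))) :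
    ∀ q ∈ Ideal.span (Set.range f),
      ∃ d : Fin μ → K,
        q - ∑ i, d i • (monomial (t i) (1 : K) * f (α i)) ∈
          Ideal.span (Set.range g) :=
  stmt_15_general f O hO hne t α hOF b β hB g c hg
end
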